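/- arXiv:2410.19625 — 3 statements merged into one kernel-verified Lean document; each statement's English description precedes it below -/
import Mathlib

section
/- Let · be a partial action of H on R, let a, g ∈ H be grouplike elements with ag = ga and g·1_R = 0, let μ ∈ k^× and let w ∈ R satisfy a·w = μ·(a·1_R)·w (this corresponds to a·w = (σ⁻¹(a)·1_R)·w with σ⁻¹(a) = χ⁻¹(a)·a = μ·a in the group-algebra case). Then: (i) a·w^j = μ^j·(a·1_R)·w^j for all j ∈ ℕ₀; (ii) (a·w^{j−k})·((a g^k b)·r)·(a·w^k) = μ^j·(a·1_R)·w^{j−k}·((g^k a b)·r)·w^k for all b ∈ H, r ∈ R, j ∈ ℕ and 0 ≤ k ≤ j; (iii) if the partial action is symmetric, then (a·w^{j−k})·((a g^k b)·r)·(a·w^k) = μ^j·w^{j−k}·((g^k a b)·r)·w^k·(a·1_R) for all b ∈ H, r ∈ R, j ∈ ℕ and 0 ≤ k ≤ j. -/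
open TensorProduct

noncomputable section

/-- Gaussian ($q$-)binomial coefficients, defined by the recursion
`binom(0,0)_q = 1`, `binom(n,m)_q = 0` for `m > n`,
`binom(n,m)_q = binom(n-1,m)_q + q^(n-m) * binom(n-1,m-1)_q`. -/
def qbinom {K : Type*} [CommRing K] (q : K) : ℕ → ℕ → K
  | 0, 0 => 1
  | 0, _ + 1 => 0
  | n + 1, 0 => qbinom q n 0
  | n + 1, m + 1 => qbinom q n (m + 1) + q ^ (n - m) * qbinom q n m

/-- A (left) partial action of a bialgebra `H` on an algebra `R`:
(PA.1) `1 · r = r`; (PA.2) `h · (r*s) = Σ (h₁ · r)(h₂ · s)`;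
(PA.3) `h · (m · r) = Σ (h₁ · 1)(h₂m · r)`. -/
structure PartialAction (k H R : Type*) [CommSemiring k] [Semiring H] [Bialgebra k H]
    [Semiring R] [Algebra k R] where
  act : H →ₗ[k] R →ₗ[k] R
  unit_act : ∀ r : R, act 1 r = r
  mul_act : ∀ (h : H) (r s : R),
    act h (r * s) = TensorProduct.lift
      ((LinearMap.mul k R).compl₁₂ (act.flip r) (act.flip s)) (Coalgebra.comul (R := k) h)
  act_act : ∀ (h m : H) (r : R),
    act h (act m r) = TensorProduct.lift
      ((LinearMap.mul k R).compl₁₂ (act.flip 1)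
        ((act.flip r).comp (LinearMap.mulRight k m))) (Coalgebra.comul (R := k) h)

/-- Symmetry (PA.S): `h · (m · r) = Σ (h₁m · r)(h₂ · 1)`. -/
def PartialAction.IsSymmetric {k H R : Type*} [CommSemiring k] [Semiring H] [Bialgebra k H]
    [Semiring R] [Algebra k R] (P : PartialAction k H R) : Prop :=
  ∀ (h m : H) (r : R),
    P.act h (P.act m r) = TensorProduct.lift
      ((LinearMap.mul k R).compl₁₂ ((P.act.flip r).comp (LinearMap.mulRight k m))
        (P.act.flip 1)) (Coalgebra.comul (R := k) h)

/-- A grouplike element: `Δ g = g ⊗ g` and `ε g = 1`. -/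
def IsGrouplike (k : Type*) {H : Type*} [CommSemiring k] [Semiring H] [Bialgebra k H]
    (g : H) : Prop :=
  Coalgebra.comul (R := k) g = g ⊗ₜ[k] g ∧ Coalgebra.counit (R := k) g = 1

/-- A `(1,g)`-primitive element: `Δ x = x ⊗ 1 + g ⊗ x`. -/
def IsOneGPrimitive (k : Type*) {H : Type*} [CommSemiring k] [Semiring H] [Bialgebra k H]
    (g x : H) : Prop :=
  Coalgebra.comul (R := k) x = x ⊗ₜ[k] (1 : H) + g ⊗ₜ[k] x

end

/-- Lemma 4.5, group-algebra case: `a, g` commuting grouplikes, `g · 1_R = 0`,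
`μ ∈ k^×` and `a · w = μ (a · 1_R) w`. Then
(i) `a · wʲ = μʲ (a · 1_R) wʲ`;
(ii) `(a·w^{j-k})((agᵏb)·r)(a·wᵏ) = μʲ (a·1) w^{j-k} ((gᵏab)·r) wᵏ`;
(iii) if the action is symmetric, `(a·w^{j-k})((agᵏb)·r)(a·wᵏ) = μʲ w^{j-k} ((gᵏab)·r) wᵏ (a·1)`. -/
theorem stmt15 {k H R : Type*} [Field k] [IsAlgClosed k] [CharZero k]
    [Ring H] [HopfAlgebra k H] [Ring R] [Algebra k R]
    (P : PartialAction k H R)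
    (a g : H) (ha : IsGrouplike k a) (hg : IsGrouplike k g) (hag : a * g = g * a)
    (hg0 : P.act g 1 = 0)
    (μ : k) (hμ : μ ≠ 0) (w : R)
    (haw : P.act a w = μ • (P.act a 1 * w)) :
    (∀ j : ℕ, P.act a (w ^ j) = μ ^ j • (P.act a 1 * w ^ j)) ∧
    (∀ (b : H) (r : R) (j i : ℕ), 1 ≤ j → i ≤ j →
      P.act a (w ^ (j - i)) * P.act (a * (g ^ i * b)) r * P.act a (w ^ i) =
        μ ^ j • (P.act a 1 * w ^ (j - i) * P.act (g ^ i * (a * b)) r * w ^ i)) ∧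
    (P.IsSymmetric →
      ∀ (b : H) (r : R) (j i : ℕ), 1 ≤ j → i ≤ j →
        P.act a (w ^ (j - i)) * P.act (a * (g ^ i * b)) r * P.act a (w ^ i) =
          μ ^ j • (w ^ (j - i) * P.act (g ^ i * (a * b)) r * w ^ i * P.act a 1)) := by
  obtain ⟨hca, hea⟩ := ha
  have hAS : a * HopfAlgebra.antipode (R := k) a = 1 := by
    have h := HopfAlgebra.mul_antipode_lTensor_comul_apply (R := k) (A := H) a
    rw [hca, hea] at h
    simpa using h
  have pa2 : ∀ r s : R, P.act a (r * s) = P.act a r * P.act a s := by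
    intro r s
    rw [P.mul_act, hca]
    simp [TensorProduct.lift.tmul]
  have pa3 : ∀ (m : H) (r : R), P.act a (P.act m r) = P.act a 1 * P.act (a * m) r := by
    intro m r
    rw [P.act_act, hca]
    simp [TensorProduct.lift.tmul]
  -- L1: right absorption
  have L1 : ∀ z : R, P.act a z * P.act a 1 = P.act a z := by
    intro z
    rw [← pa2, mul_one]
  -- L2: left absorption
  have L2 : ∀ z : R, P.act a 1 * P.act a z = P.act a z := by
    intro z
    have := pa3 1 z
    rw [mul_one, P.unit_act] at this
    exact this.symm
  -- L3: e * (h·r) = a·((S a * h)·r)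
  have L3 : ∀ (h : H) (r : R),
      P.act a 1 * P.act h r = P.act a (P.act (HopfAlgebra.antipode (R := k) a * h) r) := by
    intro h r
    rw [pa3, ← mul_assoc, hAS, one_mul]
  -- L4: e * X * e = e * X
  have L4 : ∀ (h : H) (r : R),
      P.act a 1 * P.act h r * P.act a 1 = P.act a 1 * P.act h r := by
    intro h r
    rw [L3, L1]
  -- L5: (a·z) * X * e = (a·z) * X
  have L5 : ∀ (z : R) (h : H) (r : R),
      P.act a z * P.act h r * P.act a 1 = P.act a z * P.act h r := by
    intro z h r
    calc P.act a z * P.act h r * P.act a 1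
        = P.act a z * P.act a 1 * P.act h r * P.act a 1 := by rw [L1 z]
      _ = P.act a z * (P.act a 1 * P.act h r * P.act a 1) := by simp only [mul_assoc]
      _ = P.act a z * (P.act a 1 * P.act h r) := by rw [L4]
      _ = P.act a z * P.act a 1 * P.act h r := by rw [mul_assoc]
      _ = P.act a z * P.act h r := by rw [L1]
  -- part (i)
  have part1 : ∀ j : ℕ, P.act a (w ^ j) = μ ^ j • (P.act a 1 * w ^ j) := by
    intro j
    induction j with
    | zero => simp
    | succ n ih =>
      calc P.act a (w ^ (n + 1)) = P.act a (w ^ n * w) := by rw [pow_succ]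
        _ = P.act a (w ^ n) * P.act a w := pa2 _ _
        _ = P.act a (w ^ n) * (μ • (P.act a 1 * w)) := by rw [haw]
        _ = μ • (P.act a (w ^ n) * P.act a 1 * w) := by
            rw [mul_smul_comm]; simp only [mul_assoc]
        _ = μ • (P.act a (w ^ n) * w) := by rw [L1]
        _ = μ • ((μ ^ n • (P.act a 1 * w ^ n)) * w) := by rw [ih]
        _ = μ ^ (n + 1) • (P.act a 1 * w ^ (n + 1)) := by
            rw [smul_mul_assoc, smul_smul, pow_succ, mul_comm (μ ^ n) μ, mul_assoc, pow_succ]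
  -- commutation: a * (g^i * b) = g^i * (a * b)
  have hcomm : ∀ (i : ℕ) (b : H), a * (g ^ i * b) = g ^ i * (a * b) := by
    intro i b
    have : a * g ^ i = g ^ i * a := (Commute.pow_right hag i)
    rw [← mul_assoc, this, mul_assoc]
  -- part (ii)
  have part2 : ∀ (b : H) (r : R) (j i : ℕ), 1 ≤ j → i ≤ j →
      P.act a (w ^ (j - i)) * P.act (a * (g ^ i * b)) r * P.act a (w ^ i) =
        μ ^ j • (P.act a 1 * w ^ (j - i) * P.act (g ^ i * (a * b)) r * w ^ i) := by
    intro b r j i _ hij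
    rw [← hcomm]
    set c := a * (g ^ i * b) with hc
    calc P.act a (w ^ (j - i)) * P.act c r * P.act a (w ^ i)
        = P.act a (w ^ (j - i)) * P.act c r * (μ ^ i • (P.act a 1 * w ^ i)) := by
          rw [part1 i]
      _ = μ ^ i • (P.act a (w ^ (j - i)) * P.act c r * P.act a 1 * w ^ i) := by
          rw [mul_smul_comm]; simp only [mul_assoc]
      _ = μ ^ i • (P.act a (w ^ (j - i)) * P.act c r * w ^ i) := by rw [L5]
      _ = μ ^ i • ((μ ^ (j - i) • (P.act a 1 * w ^ (j - i))) * P.act c r * w ^ i) := by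
          rw [part1 (j - i)]
      _ = (μ ^ i * μ ^ (j - i)) • (P.act a 1 * w ^ (j - i) * P.act c r * w ^ i) := by
          rw [smul_mul_assoc, smul_mul_assoc, smul_smul]
      _ = μ ^ j • (P.act a 1 * w ^ (j - i) * P.act c r * w ^ i) := by
          rw [← pow_add, Nat.add_sub_cancel' hij]
  refine ⟨part1, part2, ?_⟩
  -- part (iii): with symmetry, e = a·1 is central
  intro hs b r j i hj hij
  have paS : ∀ (m : H) (r : R), P.act a (P.act m r) = P.act (a * m) r * P.act a 1 := by
    intro m r
    rw [hs a m r, hca]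
    simp [TensorProduct.lift.tmul]
  have hcentral : ∀ r : R, P.act a 1 * r = r * P.act a 1 := by
    intro r
    have h1 := pa3 (HopfAlgebra.antipode (R := k) a) r
    have h2 := paS (HopfAlgebra.antipode (R := k) a) r
    rw [hAS, P.unit_act] at h1 h2
    rw [← h1, h2]
  rw [part2 b r j i hj hij]
  congr 1
  calc P.act a 1 * w ^ (j - i) * P.act (g ^ i * (a * b)) r * w ^ i
      = P.act a 1 * (w ^ (j - i) * P.act (g ^ i * (a * b)) r * w ^ i) := by
        simp only [mul_assoc]
    _ = (w ^ (j - i) * P.act (g ^ i * (a * b)) r * w ^ i) * P.act a 1 := hcentral _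
end

section
/- Let · be a partial action of H on R, let g ∈ H be a grouplike element with g² = 1 and let x ∈ H be a (1,g)-primitive element with x² = 0 and gx = −xg. Assume g·1_R = 0, set Ω := x·1_R, and let w ∈ R. Then the following are equivalent: (a) for all j ∈ ℕ, all b ∈ {1, g, x, gx} and all r ∈ R, Σ_{k=0}^{j} (−1)^{k(3−k)/2} · binom(j,k)_{−1} · w^{j−k}·((g^k b)·r)·w^k·Ω = Σ_{k=0}^{j} (−1)^{k(3−k)/2} · binom(j,k)_{−1} · ( (−1)^j·Ω·w^{j−k}·((g^{k+1} b)·r) + w^{j−k}·((g^{k+1} x b)·r) )·w^k; (b) Ω·w + w·Ω ∈ Z(R). (Condition (a) is the compatibility condition (3.6) of the paper for a = gx and b ∈ {1, g, x, gx}, governing when the partial action extends to the Hopf–Ore extension H[y,σ] with y·1_R = w.) -/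
open TensorProduct

section auxiliaries

lemma qbinom_succ_succ {K : Type*} [CommRing K] (q : K) (n m : ℕ) :
    qbinom q (n+1) (m+1) = qbinom q n (m+1) + q ^ (n - m) * qbinom q n m := rfl

lemma qbinom_zero' {K : Type*} [CommRing K] (q : K) : ∀ n, qbinom q n 0 = 1
  | 0 => rfl
  | n+1 => qbinom_zero' q n

lemma qbinom_eq_zero {K : Type*} [CommRing K] (q : K) : ∀ n m : ℕ, n < m → qbinom q n m = 0
  | 0, _+1, _ => rfl
  | n+1, m+1, h => by
    rw [qbinom_succ_succ, qbinom_eq_zero q n (m+1) (by omega), qbinom_eq_zero q n m (by omega),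
      mul_zero, add_zero]

lemma sgn_dvd (n : ℤ) : 2 ∣ n * (3 - n) := by
  rcases Int.even_or_odd n with ⟨t, ht⟩ | ⟨t, ht⟩
  · exact ⟨t * (3 - n), by linear_combination (3 - n) * ht⟩
  · exact ⟨n * (1 - t), by linear_combination (-n) * ht⟩

lemma sgn_succ {k : Type*} [Field k] (i : ℕ) :
    (-1 : k) ^ (((i+1 : ℕ) : ℤ) * (3 - ((i+1 : ℕ) : ℤ)) / 2)
      = (-1 : k) ^ (i+1) * (-1 : k) ^ (((i : ℤ) * (3 - (i : ℤ))) / 2) := by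
  obtain ⟨m, hm⟩ := sgn_dvd (i : ℤ)
  have h1 : ((i : ℤ) * (3 - (i : ℤ))) / 2 = m := by omega
  have h2 : (((i+1 : ℕ) : ℤ) * (3 - ((i+1 : ℕ) : ℤ))) / 2 = m + (1 - (i : ℤ)) := by
    have : (((i+1 : ℕ) : ℤ) * (3 - ((i+1 : ℕ) : ℤ))) = 2 * (m + (1 - (i : ℤ))) := by
      push_cast
      linear_combination hm
    omega
  rw [h1, h2, zpow_add₀ (by norm_num : (-1 : k) ≠ 0), mul_comm]
  congr 1
  have h3 : (1 - (i : ℤ)) = ((i : ℤ) + 1) - 2 * i := by ring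
  rw [h3, zpow_sub₀ (by norm_num : (-1 : k) ≠ 0), zpow_mul]
  norm_num
  rw [← zpow_natCast (-1 : k) (i+1)]
  push_cast
  ring

/-- The coefficient appearing in the compatibility sums. -/
noncomputable def csgn (k : Type*) [Field k] (j i : ℕ) : k :=
  (-1 : k) ^ (((i : ℤ) * (3 - (i : ℤ))) / 2) * qbinom (-1 : k) j i

lemma csgn_zero {k : Type*} [Field k] (j : ℕ) : csgn k (j+1) 0 = csgn k j 0 := by
  simp [csgn, qbinom_zero']

lemma csgn_diag {k : Type*} [Field k] (j i : ℕ) (h : j < i) : csgn k j i = 0 := by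
  simp [csgn, qbinom_eq_zero _ _ _ h]

lemma csgn_succ {k : Type*} [Field k] (j i : ℕ) :
    csgn k (j+1) (i+1) = csgn k j (i+1) + (-1 : k)^(j+1) * csgn k j i := by
  rcases le_or_gt i j with h | h
  · rw [csgn, csgn, csgn, qbinom_succ_succ, mul_add, sgn_succ]
    have hp : (-1 : k) ^ (i+1) * (-1 : k)^(j-i) = (-1 : k)^(j+1) := by
      rw [← pow_add]; congr 1; omega
    linear_combination ((-1:k)^(((i:ℤ)*(3-(i:ℤ)))/2) * qbinom (-1:k) j i) * hp
  · rw [csgn_diag (k := k) (j+1) (i+1) (by omega), csgn_diag (k := k) j (i+1) (by omega),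
      csgn_diag (k := k) j i h, mul_zero, add_zero]

open Finset in
/-- The fundamental alternating sum. -/
noncomputable def SS (k : Type*) [Field k] {R : Type*} [Ring R] [Algebra k R]
    (w u v : R) (j : ℕ) : R :=
  ∑ i ∈ Finset.range (j+1), csgn k j i • (w^(j-i) * (if Even i then u else v) * w^i)

section SSlemmas
open Finset
variable {k : Type*} [Field k] {R : Type*} [Ring R] [Algebra k R]

lemma SS_zero' (w u v : R) : SS k w u v 0 = u := by
  have h : csgn k 0 0 = 1 := by simp [csgn, qbinom]
  simp [SS, h]

lemma SS_neg (w u v : R) (j : ℕ) : SS k w (-u) (-v) j = -SS k w u v j := by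
  rw [SS, SS, ← Finset.sum_neg_distrib]
  refine Finset.sum_congr rfl fun i hi => ?_
  rcases Nat.even_or_odd i with h | h <;>
    simp [h, Nat.not_even_iff_odd.mpr, smul_neg]

lemma SS_zero_zero (w : R) (j : ℕ) : SS k w (0 : R) (0 : R) j = 0 := by
  rw [SS]
  refine Finset.sum_eq_zero fun i hi => ?_
  rcases Nat.even_or_odd i with h | h <;> simp [h, Nat.not_even_iff_odd.mpr]

lemma SS_rec (w u v : R) (j : ℕ) :
    SS k w u v (j+1) = w * SS k w u v j + ((-1 : k)^(j+1)) • (SS k w v u j * w) := by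
  have hswap : ∀ i : ℕ, (if Even (i+1) then u else v) = (if Even i then v else u) := by
    intro i; rcases Nat.even_or_odd i with h | h
    · simp [h, Nat.even_add_one]
    · simp [Nat.not_even_iff_odd.mpr h, Nat.even_add_one]
  have e2 : ((-1 : k)^(j+1)) • (SS k w v u j * w)
      = ∑ i ∈ range (j+1), ((-1:k)^(j+1) * csgn k j i) •
          (w^(j-i) * (if Even (i+1) then u else v) * w^(i+1)) := by
    rw [SS, Finset.sum_mul, Finset.smul_sum]
    refine Finset.sum_congr rfl fun i hi => ?_
    rw [smul_mul_assoc, smul_smul, hswap, mul_assoc, ← pow_succ]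
  have e1 : w * SS k w u v j
      = (∑ i ∈ range (j+1), csgn k j (i+1) •
          (w^(j-i) * (if Even (i+1) then u else v) * w^(i+1)))
        + csgn k (j+1) 0 • (w^(j+1-0) * (if Even 0 then u else v) * w^0) := by
    have hH : w * SS k w u v j = ∑ i ∈ range (j+2),
        csgn k j i • (w * (w^(j-i) * (if Even i then u else v) * w^i)) := by
      rw [Finset.sum_range_succ, csgn_diag (k := k) j (j+1) (by omega), zero_smul, add_zero,
        SS, Finset.mul_sum]
      exact Finset.sum_congr rfl fun i _ => by rw [mul_smul_comm]
    rw [hH, Finset.sum_range_succ' _ (j+1)]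
    congr 1
    · refine Finset.sum_congr rfl fun i hi => ?_
      have hij : i ≤ j := by have := Finset.mem_range.mp hi; omega
      rcases lt_or_eq_of_le hij with hlt | rfl
      · have hji : j - i = (j - (i+1)) + 1 := by omega
        rw [hji]
        simp [pow_succ', mul_assoc]
      · rw [csgn_diag (k := k) i (i+1) (by omega), zero_smul, zero_smul]
    · rw [csgn_zero]
      simp [pow_succ', mul_assoc]
  rw [e1, e2, SS, Finset.sum_range_succ' _ (j+1)]
  have hterm : ∀ i, csgn k (j+1) (i+1) •
        (w^(j+1-(i+1)) * (if Even (i+1) then u else v) * w^(i+1))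
      = csgn k j (i+1) • (w^(j-i) * (if Even (i+1) then u else v) * w^(i+1))
        + ((-1:k)^(j+1) * csgn k j i) • (w^(j-i) * (if Even (i+1) then u else v) * w^(i+1)) := by
    intro i
    rw [Nat.succ_sub_succ_eq_sub, csgn_succ, add_smul]
  simp only [hterm]
  rw [Finset.sum_add_distrib]
  abel

end SSlemmas
end auxiliaries

/-- Lemma 4.9 for Sweedler's Hopf algebra: with `g² = 1`, `x² = 0`,
`gx = -xg`, `g · 1_R = 0` and `Ω = x · 1_R`, the compatibility condition (3.6) for
`a = gx` and `b ∈ {1, g, x, gx}` holds iff `Ωw + wΩ ∈ Z(R)`. -/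
theorem stmt17 {k H R : Type*} [Field k] [IsAlgClosed k] [CharZero k]
    [Ring H] [HopfAlgebra k H] [Ring R] [Algebra k R]
    (P : PartialAction k H R) (g x : H)
    (hg : IsGrouplike k g) (hx : IsOneGPrimitive k g x)
    (hg2 : g ^ 2 = 1) (hx2 : x ^ 2 = 0) (hgx : g * x = -(x * g))
    (hg0 : P.act g 1 = 0) (w : R) :
    (∀ j : ℕ, 1 ≤ j → ∀ b ∈ ({1, g, x, g * x} : Set H), ∀ r : R,
      ∑ i ∈ Finset.range (j + 1),
        ((-1 : k) ^ (((i : ℤ) * (3 - (i : ℤ))) / 2) * qbinom (-1 : k) j i) •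
          (w ^ (j - i) * P.act (g ^ i * b) r * w ^ i * P.act x 1) =
      ∑ i ∈ Finset.range (j + 1),
        ((-1 : k) ^ (((i : ℤ) * (3 - (i : ℤ))) / 2) * qbinom (-1 : k) j i) •
          ((((-1 : k) ^ j • (P.act x 1 * (w ^ (j - i) * P.act (g ^ (i + 1) * b) r))) +
              w ^ (j - i) * P.act (g ^ (i + 1) * (x * b)) r) * w ^ i)) ↔
    P.act x 1 * w + w * P.act x 1 ∈ Set.center R := by
  have hg1 : Coalgebra.comul (R := k) g = g ⊗ₜ[k] g := hg.1
  have hx1 : Coalgebra.comul (R := k) x = x ⊗ₜ[k] (1 : H) + g ⊗ₜ[k] x := hx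
  have hgg : g * g = 1 := by rw [← pow_two]; exact hg2
  have hxx : x * x = 0 := by rw [← pow_two]; exact hx2
  have hxg : x * g = -(g * x) := by rw [hgx, neg_neg]
  have hgxg : (g * x) * g = -x := by rw [hgx, neg_mul, mul_assoc, hgg, mul_one]
  have hggx : g * (g * x) = x := by rw [← mul_assoc, hgg, one_mul]
  have hgxgx : (g * x) * (g * x) = 0 := by rw [← mul_assoc, hgxg, neg_mul, hxx, neg_zero]
  have hxgx : x * (g * x) = 0 := by rw [← mul_assoc, hxg, neg_mul, mul_assoc, hxx, mul_zero, neg_zero]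
  have hcgx : Coalgebra.comul (R := k) (g * x) = (g * x) ⊗ₜ[k] g + (1 : H) ⊗ₜ[k] (g * x) := by
    rw [Bialgebra.comul_mul, hg1, hx1, mul_add, Algebra.TensorProduct.tmul_mul_tmul,
      Algebra.TensorProduct.tmul_mul_tmul, mul_one, hgg]
  -- multiplicativity instances
  have hEg : ∀ r s : R, P.act g (r * s) = P.act g r * P.act g s := by
    intro r s
    rw [P.mul_act g r s, hg1, TensorProduct.lift.tmul]
    simp [LinearMap.compl₁₂_apply, LinearMap.mul_apply', LinearMap.flip_apply]
  have hEx : ∀ r s : R, P.act x (r * s) = P.act x r * s + P.act g r * P.act x s := by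
    intro r s
    rw [P.mul_act x r s, hx1, map_add, TensorProduct.lift.tmul, TensorProduct.lift.tmul]
    simp [LinearMap.compl₁₂_apply, LinearMap.mul_apply', LinearMap.flip_apply, P.unit_act]
  have hEgx : ∀ r s : R, P.act (g * x) (r * s)
      = P.act (g * x) r * P.act g s + r * P.act (g * x) s := by
    intro r s
    rw [P.mul_act (g * x) r s, hcgx, map_add, TensorProduct.lift.tmul, TensorProduct.lift.tmul]
    simp [LinearMap.compl₁₂_apply, LinearMap.mul_apply', LinearMap.flip_apply, P.unit_act]
  have hAgx : ∀ (m : H) (r : R), P.act (g * x) (P.act m r)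
      = P.act (g * x) 1 * P.act (g * m) r + P.act ((g * x) * m) r := by
    intro m r
    rw [P.act_act (g * x) m r, hcgx, map_add, TensorProduct.lift.tmul, TensorProduct.lift.tmul]
    simp [LinearMap.compl₁₂_apply, LinearMap.mul_apply', LinearMap.flip_apply,
      LinearMap.mulRight_apply, P.unit_act]
  -- basic act values
  have hgr : ∀ s : R, P.act g s = 0 := by
    intro s
    have h := hEg s 1
    rw [mul_one, hg0, mul_zero] at h
    exact h
  have hxr : ∀ s : R, P.act x s = P.act x 1 * s := by
    intro s
    have h := hEx 1 s
    rw [one_mul, hg0, zero_mul, add_zero] at h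
    exact h
  have hgxr0 : ∀ s : R, P.act (g * x) s = s * P.act (g * x) 1 := by
    intro s
    have h := hEgx s 1
    rw [mul_one, hg0, mul_zero, zero_add] at h
    exact h
  have hL : P.act (g * x) 1 = P.act x 1 := by
    have h := hAgx g 1
    rw [hg0, map_zero, hgg, P.unit_act, mul_one, hgxg, map_neg, LinearMap.neg_apply] at h
    have h2 := h.symm
    rw [add_neg_eq_zero] at h2
    exact h2
  have hgxr : ∀ s : R, P.act (g * x) s = s * P.act x 1 := by
    intro s; rw [hgxr0 s, hL]
  -- Ω² is central
  have hO2 : ∀ s : R, s * P.act x 1 * P.act x 1 = P.act x 1 * (P.act x 1 * s) := by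
    intro s
    have h := hAgx (g * x) s
    rw [hgxr s, hgxr (s * P.act x 1), hggx, hxr s, hgxgx, map_zero, LinearMap.zero_apply,
      add_zero, hL] at h
    exact h
  -- powers of g
  have hpow : ∀ i : ℕ, g ^ i = if Even i then 1 else g := by
    intro i
    induction i with
    | zero => simp
    | succ n ihn =>
      rw [pow_succ, ihn]
      rcases Nat.even_or_odd n with h | h
      · simp [h, Nat.even_add_one]
      · have h' := Nat.not_even_iff_odd.mpr h
        simp [h', Nat.even_add_one, hgg]
  have flipIf : ∀ (i : ℕ) (a b : R), (if Even (i+1) then a else b) = (if Even i then b else a) := by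
    intro i a b; by_cases h : Even i <;> simp [h, Nat.even_add_one]
  -- act tables
  have tA1 : ∀ (i : ℕ) (r : R), P.act (g ^ i * 1) r = (if Even i then r else 0) := by
    intro i r; rw [mul_one, hpow]; by_cases h : Even i
    · simp only [if_pos h, P.unit_act]
    · simp only [if_neg h, hgr]
  have tAg : ∀ (i : ℕ) (r : R), P.act (g ^ i * g) r = (if Even i then 0 else r) := by
    intro i r; rw [hpow]; by_cases h : Even i
    · simp only [if_pos h, one_mul, hgr]
    · simp only [if_neg h, hgg, P.unit_act]
  have tAx : ∀ (i : ℕ) (r : R),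
      P.act (g ^ i * x) r = (if Even i then P.act x 1 * r else r * P.act x 1) := by
    intro i r; rw [hpow]; by_cases h : Even i
    · simp only [if_pos h, one_mul]; exact hxr r
    · simp only [if_neg h]; exact hgxr r
  have tAgx : ∀ (i : ℕ) (r : R),
      P.act (g ^ i * (g * x)) r = (if Even i then r * P.act x 1 else P.act x 1 * r) := by
    intro i r; rw [hpow]; by_cases h : Even i
    · simp only [if_pos h, one_mul]; exact hgxr r
    · simp only [if_neg h, hggx]; exact hxr r
  have tA1' : ∀ (i : ℕ) (r : R), P.act (g ^ (i+1) * 1) r = (if Even i then 0 else r) := by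
    intro i r; rw [tA1, flipIf]
  have tAg' : ∀ (i : ℕ) (r : R), P.act (g ^ (i+1) * g) r = (if Even i then r else 0) := by
    intro i r; rw [tAg, flipIf]
  have tAx' : ∀ (i : ℕ) (r : R),
      P.act (g ^ (i+1) * x) r = (if Even i then r * P.act x 1 else P.act x 1 * r) := by
    intro i r; rw [tAx, flipIf]
  have tAgx' : ∀ (i : ℕ) (r : R),
      P.act (g ^ (i+1) * (g * x)) r = (if Even i then P.act x 1 * r else r * P.act x 1) := by
    intro i r; rw [tAgx, flipIf]
  have tB1 : ∀ (i : ℕ) (r : R),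
      P.act (g ^ (i+1) * (x * 1)) r = (if Even i then r * P.act x 1 else P.act x 1 * r) := by
    intro i r; rw [mul_one, tAx']
  have tBg : ∀ (i : ℕ) (r : R),
      P.act (g ^ (i+1) * (x * g)) r
        = (if Even i then -(P.act x 1 * r) else -(r * P.act x 1)) := by
    intro i r
    rw [hxg, mul_neg, map_neg, LinearMap.neg_apply, tAgx, flipIf]
    by_cases h : Even i <;> simp [h]
  have tBx : ∀ (i : ℕ) (r : R), P.act (g ^ (i+1) * (x * x)) r = (if Even i then (0:R) else 0) := by
    intro i r; rw [hxx, mul_zero, map_zero, LinearMap.zero_apply]; simp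
  have tBgx : ∀ (i : ℕ) (r : R),
      P.act (g ^ (i+1) * (x * (g * x))) r = (if Even i then (0:R) else 0) := by
    intro i r; rw [hxgx, mul_zero, map_zero, LinearMap.zero_apply]; simp
  -- coefficient identification
  have hcoef : ∀ (j i : ℕ),
      ((-1 : k) ^ (((i : ℤ) * (3 - (i : ℤ))) / 2) * qbinom (-1 : k) j i) = csgn k j i :=
    fun _ _ => rfl
  -- sum transformations
  have sumL : ∀ (j : ℕ) (u v : R) (A : ℕ → R), (∀ i, A i = if Even i then u else v) →
      (∑ i ∈ Finset.range (j+1), csgn k j i • (w^(j-i) * A i * w^i * P.act x 1))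
        = SS k w u v j * P.act x 1 := by
    intro j u v A hA
    rw [SS, Finset.sum_mul]
    refine Finset.sum_congr rfl fun i _ => ?_
    rw [hA, smul_mul_assoc]
  have sumR : ∀ (j : ℕ) (u v u' v' : R) (A B : ℕ → R),
      (∀ i, A i = if Even i then u else v) → (∀ i, B i = if Even i then u' else v') →
      (∑ i ∈ Finset.range (j+1), csgn k j i •
          ((((-1:k)^j • (P.act x 1 * (w^(j-i) * A i))) + w^(j-i) * B i) * w^i))
        = (-1:k)^j • (P.act x 1 * SS k w u v j) + SS k w u' v' j := by
    intro j u v u' v' A B hA hB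
    have step : ∀ i ∈ Finset.range (j+1), csgn k j i •
          ((((-1:k)^j • (P.act x 1 * (w^(j-i) * A i))) + w^(j-i) * B i) * w^i)
        = (-1:k)^j • (csgn k j i • (P.act x 1 * (w^(j-i) * (if Even i then u else v) * w^i)))
          + csgn k j i • (w^(j-i) * (if Even i then u' else v') * w^i) := by
      intro i _
      rw [hA, hB, add_mul, smul_add, smul_mul_assoc, smul_comm (csgn k j i) ((-1:k)^j),
        mul_assoc (P.act x 1), mul_assoc]
    rw [Finset.sum_congr rfl step, Finset.sum_add_distrib, ← Finset.smul_sum]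
    congr 2
    rw [SS, Finset.mul_sum]
    exact Finset.sum_congr rfl fun i _ => by rw [mul_smul_comm]
  constructor
  · -- (a) → (b)
    intro hcond
    rw [Semigroup.mem_center_iff]
    intro z
    have hmem : g ∈ ({1, g, x, g * x} : Set H) := by simp
    have h := hcond 1 le_rfl g hmem z
    simp only [hcoef] at h
    rw [sumL 1 0 z _ (fun i => tAg i z),
      sumR 1 z 0 (-(P.act x 1 * z)) (-(z * P.act x 1)) _ _
        (fun i => tAg' i z) (fun i => tBg i z), SS_neg] at h
    have hSS1 : ∀ u v : R, SS k w u v 1 = w * u - v * w := by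
      intro u v
      rw [show (1:ℕ) = 0 + 1 from rfl, SS_rec, SS_zero', SS_zero', pow_one, neg_one_smul,
        ← sub_eq_add_neg]
    rw [hSS1, hSS1, hSS1, pow_one, neg_one_smul] at h
    linear_combination (norm := noncomm_ring) -h
  · -- (b) → (a)
    intro hcent j hj b hb r
    have hTz : ∀ z : R, P.act x 1 * (w * z) + w * (P.act x 1 * z)
        = z * (P.act x 1 * w) + z * (w * P.act x 1) := by
      intro z
      have h := Semigroup.mem_center_iff.mp hcent z
      simp only [mul_add, add_mul, mul_assoc] at h
      exact h.symm
    have key : ∀ (r : R) (j : ℕ),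
        SS k w r 0 j * P.act x 1
            = (-1:k)^j • (P.act x 1 * SS k w 0 r j)
              + SS k w (r * P.act x 1) (P.act x 1 * r) j ∧
        SS k w 0 r j * P.act x 1
            = (-1:k)^j • (P.act x 1 * SS k w r 0 j)
              - SS k w (P.act x 1 * r) (r * P.act x 1) j ∧
        SS k w (P.act x 1 * r) (r * P.act x 1) j * P.act x 1
            = (-1:k)^j • (P.act x 1 * SS k w (r * P.act x 1) (P.act x 1 * r) j) ∧
        SS k w (r * P.act x 1) (P.act x 1 * r) j * P.act x 1
            = (-1:k)^j • (P.act x 1 * SS k w (P.act x 1 * r) (r * P.act x 1) j) := by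
      intro r j
      induction j with
      | zero =>
        refine ⟨by simp [SS_zero'], by simp [SS_zero'], by simp [SS_zero', mul_assoc],
          by simpa [SS_zero'] using hO2 r⟩
      | succ j ihj =>
        obtain ⟨ih1, ih2, ih3, ih4⟩ := ihj
        rcases Nat.even_or_odd j with hjp | hjp
        · have hej : ((-1:k))^j = 1 := hjp.neg_one_pow
          have hoj : ((-1:k))^(j+1) = -1 := (hjp.add_one).neg_one_pow
          rw [hej, one_smul] at ih1 ih2 ih3 ih4
          refine ⟨?_, ?_, ?_, ?_⟩ <;>
            simp only [SS_rec, hoj, neg_one_smul]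
          · linear_combination (norm := noncomm_ring)
              w * ih1 + ih2 * w + hTz (SS k w 0 r j)
          · linear_combination (norm := noncomm_ring)
              w * ih2 + ih1 * w + hTz (SS k w r 0 j)
          · linear_combination (norm := noncomm_ring)
              w * ih3 + ih4 * w + hTz (SS k w (r * P.act x 1) (P.act x 1 * r) j)
          · linear_combination (norm := noncomm_ring)
              w * ih4 + ih3 * w + hTz (SS k w (P.act x 1 * r) (r * P.act x 1) j)
        · have hej : ((-1:k))^j = -1 := hjp.neg_one_pow
          have hoj : ((-1:k))^(j+1) = 1 := (hjp.add_one).neg_one_pow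
          rw [hej, neg_one_smul] at ih1 ih2 ih3 ih4
          refine ⟨?_, ?_, ?_, ?_⟩ <;>
            simp only [SS_rec, hoj, one_smul]
          · linear_combination (norm := noncomm_ring)
              w * ih1 - ih2 * w - hTz (SS k w 0 r j)
          · linear_combination (norm := noncomm_ring)
              w * ih2 - ih1 * w - hTz (SS k w r 0 j)
          · linear_combination (norm := noncomm_ring)
              w * ih3 - ih4 * w - hTz (SS k w (r * P.act x 1) (P.act x 1 * r) j)
          · linear_combination (norm := noncomm_ring)
              w * ih4 - ih3 * w - hTz (SS k w (P.act x 1 * r) (r * P.act x 1) j)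
    simp only [hcoef]
    simp only [Set.mem_insert_iff, Set.mem_singleton_iff] at hb
    rcases hb with hb | hb | hb | hb
    · rw [hb]
      rw [sumL j r 0 _ (fun i => tA1 i r),
        sumR j 0 r (r * P.act x 1) (P.act x 1 * r) _ _
          (fun i => tA1' i r) (fun i => tB1 i r)]
      exact (key r j).1
    · rw [hb]
      rw [sumL j 0 r _ (fun i => tAg i r),
        sumR j r 0 (-(P.act x 1 * r)) (-(r * P.act x 1)) _ _
          (fun i => tAg' i r) (fun i => tBg i r), SS_neg, ← sub_eq_add_neg]
      exact (key r j).2.1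
    · rw [hb]
      rw [sumL j (P.act x 1 * r) (r * P.act x 1) _ (fun i => tAx i r),
        sumR j (r * P.act x 1) (P.act x 1 * r) 0 0 _ _
          (fun i => tAx' i r) (fun i => tBx i r), SS_zero_zero, add_zero]
      exact (key r j).2.2.1
    · rw [hb]
      rw [sumL j (r * P.act x 1) (P.act x 1 * r) _ (fun i => tAgx i r),
        sumR j (P.act x 1 * r) (r * P.act x 1) 0 0 _ _
          (fun i => tAgx' i r) (fun i => tBgx i r), SS_zero_zero, add_zero]
      exact (key r j).2.2.2
end

section
/- Let g ∈ H be a grouplike element, x ∈ H a (1,g)-primitive element with xg = q·gx for some q ∈ k^×, and let A ⊆ H be a subalgebra with g, g⁻¹ ∈ A and Δ(A) ⊆ A⊗A. Suppose τ : A → A is a bijective algebra map satisfying, for all a ∈ A: ax = x·τ(a), Δ(τ(a)) = Σ τ(a₁) ⊗ a₂, and Δ(τ(a)) = Σ g⁻¹a₁g ⊗ τ(a₂). Let · be a partial action of H on R with g·1_R = 0. If a ∈ A is a grouplike element with τ(a) = μ·a for some μ ∈ k^×, then a·(x·1_R) = μ·(a·1_R)·(x·1_R) = (τ(a)·1_R)·(x·1_R).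 -/
open TensorProduct

/-- Remark 4.4: under the Hopf–Ore extension hypotheses with `g · 1_R = 0`,
if `a ∈ A` is grouplike and `τ(a) = μ a` for some `μ ∈ k^×`, then
`a · (x · 1_R) = μ (a · 1_R)(x · 1_R) = (τ(a) · 1_R)(x · 1_R)`. -/
theorem stmt18 {k H A R : Type*} [Field k] [IsAlgClosed k] [CharZero k]
    [Ring H] [HopfAlgebra k H] [Ring A] [Bialgebra k A] [Ring R] [Algebra k R]
    -- `A ⊆ H` is a subalgebra with `Δ(A) ⊆ A ⊗ A`: we realize it as an injective algebra map
    -- `ι : A → H` compatible with the comultiplications and counits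
    (ι : A →ₐ[k] H) (hιinj : Function.Injective ι)
    (hιcomul : ∀ a : A, Coalgebra.comul (R := k) (ι a) =
      TensorProduct.map ι.toLinearMap ι.toLinearMap (Coalgebra.comul (R := k) a))
    (hιcounit : ∀ a : A, Coalgebra.counit (R := k) (ι a) = Coalgebra.counit (R := k) a)
    -- `g, g⁻¹ ∈ A`, with `g` grouplike and `g⁻¹ = S(g)` its inverse
    (g gi : A) (hg : IsGrouplike k (ι g))
    (hggi : ι g * ι gi = 1) (hgig : ι gi * ι g = 1)
    -- `x` is `(1,g)`-primitive with `xg = q gx`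
    (x : H) (hx : IsOneGPrimitive k (ι g) x)
    (q : k) (hq : q ≠ 0) (hxg : x * ι g = q • (ι g * x))
    -- `τ` is a bijective algebra map `A → A` (playing the role of `σ⁻¹`) with `ax = xτ(a)`,
    -- `Δ(τ(a)) = Σ τ(a₁) ⊗ a₂` and `Δ(τ(a)) = Σ g⁻¹a₁g ⊗ τ(a₂)`
    (τ : A ≃ₐ[k] A)
    (hτx : ∀ a : A, ι a * x = x * ι (τ a))
    (hτ1 : ∀ a : A, Coalgebra.comul (R := k) (τ a) =
      TensorProduct.map τ.toLinearMap LinearMap.id (Coalgebra.comul (R := k) a))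
    (hτ2 : ∀ a : A,
      TensorProduct.map ι.toLinearMap ι.toLinearMap (Coalgebra.comul (R := k) (τ a)) =
        TensorProduct.map
          ((LinearMap.mulLeft k (ι gi)).comp
            ((LinearMap.mulRight k (ι g)).comp ι.toLinearMap))
          (ι.toLinearMap.comp τ.toLinearMap)
          (Coalgebra.comul (R := k) a))
    -- a partial action of `H` on `R` with `g · 1_R = 0`
    (P : PartialAction k H R) (hg0 : P.act (ι g) 1 = 0)
    (a : A) (ha : IsGrouplike k (ι a)) (μ : k) (hμ : μ ≠ 0) (hτa : τ a = μ • a) :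
    P.act (ι a) (P.act x 1) = μ • (P.act (ι a) 1 * P.act x 1) ∧
      P.act (ι a) (P.act x 1) = P.act (ι (τ a)) 1 * P.act x 1 := by
  classical
  obtain ⟨hca, hεa⟩ := ha
  obtain ⟨hcg, hεg⟩ := hg
  -- ### Basic evaluation lemmas for the partial action ###
  have glAA : ∀ b : H, Coalgebra.comul (R := k) b = b ⊗ₜ[k] b →
      ∀ (m : H) (r : R), P.act b (P.act m r) = P.act b 1 * P.act (b * m) r := by
    intro b hb m r
    rw [P.act_act, hb]
    simp [LinearMap.compl₁₂_apply, LinearMap.mul_apply']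
  have glMA : ∀ b : H, Coalgebra.comul (R := k) b = b ⊗ₜ[k] b →
      ∀ (r s : R), P.act b (r * s) = P.act b r * P.act b s := by
    intro b hb r s
    rw [P.mul_act, hb]
    simp [LinearMap.compl₁₂_apply, LinearMap.mul_apply']
  -- comul of an inverse of a grouplike is grouplike
  have inv_comul : ∀ b c : H, b * c = 1 → c * b = 1 →
      Coalgebra.comul (R := k) b = b ⊗ₜ[k] b →
      Coalgebra.comul (R := k) c = c ⊗ₜ[k] c := by
    intro b c hbc hcb hb
    have h1 : Coalgebra.comul (R := k) c * (b ⊗ₜ[k] b) = 1 := by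
      rw [← hb, ← Bialgebra.comul_mul, hcb, Bialgebra.comul_one]
    calc Coalgebra.comul (R := k) c
        = Coalgebra.comul (R := k) c * ((b ⊗ₜ[k] b) * (c ⊗ₜ[k] c)) := by
          rw [Algebra.TensorProduct.tmul_mul_tmul, hbc, ← Algebra.TensorProduct.one_def, mul_one]
      _ = (Coalgebra.comul (R := k) c * (b ⊗ₜ[k] b)) * (c ⊗ₜ[k] c) := (mul_assoc _ _ _).symm
      _ = c ⊗ₜ[k] c := by rw [h1, one_mul]
  -- ### the antipode of a : an inverse of ι a ###
  set Sa : H := HopfAlgebra.antipode (R := k) (ι a) with hSa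
  have hSaA : Sa * ι a = 1 := by
    have := HopfAlgebra.mul_antipode_rTensor_comul_apply (R := k) (a := ι a)
    rwa [hca, LinearMap.rTensor_tmul, LinearMap.mul'_apply, hεa, map_one] at this
  have hASa : ι a * Sa = 1 := by
    have := HopfAlgebra.mul_antipode_lTensor_comul_apply (R := k) (a := ι a)
    rwa [hca, LinearMap.lTensor_tmul, LinearMap.mul'_apply, hεa, map_one] at this
  have hcSa : Coalgebra.comul (R := k) Sa = Sa ⊗ₜ[k] Sa := inv_comul _ _ hASa hSaA hca
  have hcgi : Coalgebra.comul (R := k) (ι gi) = ι gi ⊗ₜ[k] ι gi := inv_comul _ _ hggi hgig hcg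
  -- ### F1 : ι a commutes with ι g (from hτ2) ###
  have hεaA : Coalgebra.counit (R := k) a = 1 := by rw [← hιcounit a]; exact hεa
  have hΔa : Coalgebra.comul (R := k) a = a ⊗ₜ[k] a := by
    have hinj : Function.Injective (TensorProduct.map ι.toLinearMap ι.toLinearMap) := by
      rw [← LinearMap.lTensor_comp_rTensor]
      exact (Module.Flat.lTensor_preserves_injective_linearMap _ hιinj).comp
        (Module.Flat.rTensor_preserves_injective_linearMap _ hιinj)
    apply hinj
    rw [← hιcomul a, hca]
    simp
  have hF1' : ι a = ι gi * (ι a * ι g) := by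
    have h2 := hτ2 a
    rw [hτa, map_smul, map_smul, hΔa] at h2
    simp only [TensorProduct.smul_tmul', TensorProduct.map_tmul, LinearMap.comp_apply,
      LinearMap.mulLeft_apply, LinearMap.mulRight_apply, AlgHom.toLinearMap_apply,
      AlgEquiv.toLinearMap_apply, hτa, map_smul] at h2
    -- h2 : μ-scaled equality of pure tensors; cancel μ and contract with the counit
    have h3 : (ι a) ⊗ₜ[k] (ι a) = (ι gi * (ι a * ι g)) ⊗ₜ[k] (ι a) := by
      have hμinj : Function.Injective (fun t : H ⊗[k] H => μ • t) :=
        fun s t hst => by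
          have := congrArg (fun t : H ⊗[k] H => μ⁻¹ • t) hst
          simpa [smul_smul, inv_mul_cancel₀ hμ] using this
      apply hμinj
      simpa [TensorProduct.smul_tmul', TensorProduct.tmul_smul, smul_smul] using h2
    have h4 := congrArg ((TensorProduct.rid k H).toLinearMap.comp
      (LinearMap.lTensor H (Coalgebra.counit (R := k) (A := H)))) h3
    simpa [hεa] using h4
  have hF1 : ι g * ι a = ι a * ι g := by
    calc ι g * ι a = ι g * (ι gi * (ι a * ι g)) := by rw [← hF1']
      _ = (ι g * ι gi) * (ι a * ι g) := (mul_assoc _ _ _).symm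
      _ = ι a * ι g := by rw [hggi, one_mul]
  have hF1s : ι g * Sa = Sa * ι g := by
    calc ι g * Sa = (Sa * ι a) * (ι g * Sa) := by rw [hSaA, one_mul]
      _ = Sa * (ι a * ι g) * Sa := by noncomm_ring
      _ = Sa * (ι g * ι a) * Sa := by rw [hF1]
      _ = (Sa * ι g) * (ι a * Sa) := by noncomm_ring
      _ = Sa * ι g := by rw [hASa, mul_one]
  -- ### F2, F3 : commutation of x with ι a and Sa ###
  have hF2 : ι a * x = μ • (x * ι a) := by
    rw [hτx a, hτa, map_smul, mul_smul_comm]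
  have hF3 : x * Sa = μ • (Sa * x) := by
    calc x * Sa = (Sa * ι a) * (x * Sa) := by rw [hSaA, one_mul]
      _ = Sa * (ι a * x) * Sa := by noncomm_ring
      _ = Sa * (μ • (x * ι a)) * Sa := by rw [hF2]
      _ = μ • ((Sa * x) * (ι a * Sa)) := by
          rw [mul_smul_comm, smul_mul_assoc]; noncomm_ring
      _ = μ • (Sa * x) := by rw [hASa, mul_one]
  have hF3' : Sa * x = μ⁻¹ • (x * Sa) := by
    rw [hF3, smul_smul, inv_mul_cancel₀ hμ, one_smul]
  -- ### basic action lemmas ###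
  have L1 : ∀ r : R, P.act (ι g) r = 0 := by
    intro r
    have h := glAA (ι g) hcg 1 r
    rwa [P.unit_act, hg0, zero_mul] at h
  have xAA : ∀ (m : H) (r : R), P.act x (P.act m r) =
      P.act x 1 * P.act m r + P.act (ι g) 1 * P.act (x * m) r := by
    intro m r
    rw [P.act_act, hx]
    simp [LinearMap.compl₁₂_apply, LinearMap.mul_apply']
  have L2 : ∀ r : R, P.act x r = P.act x 1 * r := by
    intro r
    have h := xAA 1 r
    rwa [P.unit_act, hg0, zero_mul, add_zero] at h
  set e : R := P.act (ι a) 1 with he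
  set u : R := P.act x 1 with hu
  set f : R := P.act Sa 1 with hf
  -- comul of x * c for grouplike c
  have cxc : ∀ c : H, Coalgebra.comul (R := k) c = c ⊗ₜ[k] c →
      Coalgebra.comul (R := k) (x * c) = (x * c) ⊗ₜ[k] c + (ι g * c) ⊗ₜ[k] (x * c) := by
    intro c hc
    rw [Bialgebra.comul_mul, hx, hc, add_mul, Algebra.TensorProduct.tmul_mul_tmul,
      Algebra.TensorProduct.tmul_mul_tmul, one_mul]
  have xcAA : ∀ c : H, Coalgebra.comul (R := k) c = c ⊗ₜ[k] c →
      ∀ (m : H) (r : R), P.act (x * c) (P.act m r) =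
        P.act (x * c) 1 * P.act (c * m) r + P.act (ι g * c) 1 * P.act (x * c * m) r := by
    intro c hc m r
    rw [P.act_act, cxc c hc]
    simp [LinearMap.compl₁₂_apply, LinearMap.mul_apply']
  -- ### MASTER identities ###
  -- auxiliary grouplikes
  have hcc1 : Coalgebra.comul (R := k) (ι gi * ι a) = (ι gi * ι a) ⊗ₜ[k] (ι gi * ι a) := by
    rw [Bialgebra.comul_mul, hcgi, hca, Algebra.TensorProduct.tmul_mul_tmul]
  have hcc2 : Coalgebra.comul (R := k) (ι gi * Sa) = (ι gi * Sa) ⊗ₜ[k] (ι gi * Sa) := by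
    rw [Bialgebra.comul_mul, hcgi, hcSa, Algebra.TensorProduct.tmul_mul_tmul]
  have hcSaG : Coalgebra.comul (R := k) (Sa * ι g) = (Sa * ι g) ⊗ₜ[k] (Sa * ι g) := by
    rw [Bialgebra.comul_mul, hcSa, hcg, Algebra.TensorProduct.tmul_mul_tmul]
  have hcAG : Coalgebra.comul (R := k) (ι a * ι g) = (ι a * ι g) ⊗ₜ[k] (ι a * ι g) := by
    rw [Bialgebra.comul_mul, hca, hcg, Algebra.TensorProduct.tmul_mul_tmul]
  -- element computations in H
  have hGc1 : ι g * (ι gi * ι a) = ι a := by rw [← mul_assoc, hggi, one_mul]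
  have hc1G : (ι gi * ι a) * ι g = ι a := by
    rw [mul_assoc, ← hF1, ← mul_assoc, hgig, one_mul]
  have hc1SaG : (ι gi * ι a) * (Sa * ι g) = 1 := by
    calc (ι gi * ι a) * (Sa * ι g) = ι gi * ((ι a * Sa) * ι g) := by noncomm_ring
      _ = 1 := by rw [hASa, one_mul, hgig]
  have hxc1G : (x * (ι gi * ι a)) * ι g = x * ι a := by rw [mul_assoc, hc1G]
  have hxc1SaG : (x * (ι gi * ι a)) * (Sa * ι g) = x := by rw [mul_assoc, hc1SaG, mul_one]
  have hSaGA : (Sa * ι g) * ι a = ι g := by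
    calc (Sa * ι g) * ι a = Sa * (ι g * ι a) := mul_assoc _ _ _
      _ = (Sa * ι a) * ι g := by rw [hF1, ← mul_assoc]
      _ = ι g := by rw [hSaA, one_mul]
  have hGc2 : ι g * (ι gi * Sa) = Sa := by rw [← mul_assoc, hggi, one_mul]
  have hc2G : (ι gi * Sa) * ι g = Sa := by
    rw [mul_assoc, ← hF1s, ← mul_assoc, hgig, one_mul]
  have hc2AG : (ι gi * Sa) * (ι a * ι g) = 1 := by
    calc (ι gi * Sa) * (ι a * ι g) = ι gi * ((Sa * ι a) * ι g) := by noncomm_ring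
      _ = 1 := by rw [hSaA, one_mul, hgig]
  have hxc2G : (x * (ι gi * Sa)) * ι g = x * Sa := by rw [mul_assoc, hc2G]
  have hxc2AG : (x * (ι gi * Sa)) * (ι a * ι g) = x := by rw [mul_assoc, hc2AG, mul_one]
  have hAGSa : (ι a * ι g) * Sa = ι g := by
    calc (ι a * ι g) * Sa = ι a * (ι g * Sa) := mul_assoc _ _ _
      _ = (ι a * Sa) * ι g := by rw [hF1s, ← mul_assoc]
      _ = ι g := by rw [hASa, one_mul]
  -- MASTER_a : e * act (x * ι a) r = e * (u * act (ι a) r)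
  have MA : ∀ r : R, e * P.act (x * ι a) r = e * (u * P.act (ι a) r) := by
    intro r
    have hJ := xcAA (ι gi * ι a) hcc1 (ι g) r
    rw [L1 r, map_zero, hc1G, hGc1, hxc1G] at hJ
    -- hJ : 0 = p * act (ι a) r + e * act (x * ι a) r
    have hK := xcAA (ι gi * ι a) hcc1 (Sa * ι g) (P.act (ι a) r)
    have hinner : P.act (Sa * ι g) (P.act (ι a) r) = 0 := by
      rw [glAA _ hcSaG (ι a) r, hSaGA, L1 r, mul_zero]
    rw [hinner, map_zero, hc1SaG, hGc1, hxc1SaG, P.unit_act, L2 (P.act (ι a) r)] at hK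
    -- hK : 0 = p * act (ι a) r + e * (u * act (ι a) r)
    exact add_left_cancel (hJ.symm.trans hK)
  -- MASTER_s : f * act (x * Sa) r = f * (u * act Sa r)
  have MS : ∀ r : R, f * P.act (x * Sa) r = f * (u * P.act Sa r) := by
    intro r
    have hJ := xcAA (ι gi * Sa) hcc2 (ι g) r
    rw [L1 r, map_zero, hc2G, hGc2, hxc2G] at hJ
    have hK := xcAA (ι gi * Sa) hcc2 (ι a * ι g) (P.act Sa r)
    have hinner : P.act (ι a * ι g) (P.act Sa r) = 0 := by
      rw [glAA _ hcAG Sa r, hAGSa, L1 r, mul_zero]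
    rw [hinner, map_zero, hc2AG, hGc2, hxc2AG, P.unit_act, L2 (P.act Sa r)] at hK
    exact add_left_cancel (hJ.symm.trans hK)
  -- ### T1 : a · (x · 1) = μ • (e * (u * e)) ###
  have T1 : P.act (ι a) (P.act x 1) = μ • (e * (u * e)) := by
    rw [glAA (ι a) hca x 1, hF2, map_smul, LinearMap.smul_apply, mul_smul_comm, MA 1]
  -- ### S1 : Sa · u = μ⁻¹ • (f * (u * f)) ###
  have S1 : P.act Sa u = μ⁻¹ • (f * (u * f)) := by
    rw [hu, glAA Sa hcSa x 1, hF3', map_smul, LinearMap.smul_apply, mul_smul_comm, MS 1]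
  -- ### two-way computation of a · (Sa · u), giving e * u = e * (u * e) ###
  have hee : e * e = e := by
    have h := glMA (ι a) hca 1 1
    rw [one_mul] at h
    exact h.symm
  have haf : P.act (ι a) f = e := by
    rw [hf, glAA (ι a) hca Sa 1, hASa, P.unit_act 1, mul_one]
  have hWA : P.act (ι a) (P.act Sa u) = e * u := by
    rw [glAA (ι a) hca Sa u, hASa, P.unit_act u]
  have hWB : P.act (ι a) (P.act Sa u) = e * (u * e) := by
    rw [S1, map_smul, glMA (ι a) hca f (u * f), glMA (ι a) hca u f, haf, T1]
    rw [smul_mul_assoc, mul_smul_comm, smul_smul, inv_mul_cancel₀ hμ, one_smul]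
    calc e * (e * (u * e) * e) = (e * e) * (u * (e * e)) := by noncomm_ring
      _ = e * (u * e) := by rw [hee]
  have KEY : e * u = e * (u * e) := hWA.symm.trans hWB
  -- ### conclusion ###
  constructor
  · rw [T1, ← KEY]
  · rw [T1, ← KEY, hτa, map_smul, map_smul, LinearMap.smul_apply, smul_mul_assoc]
end
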